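/- For every z > 0 and all real α, β with (α, β) ≠ (0, 0), ∫_0^{2π} exp{ i z (α cos θ + β sin θ) } · sin²θ dθ = 2π · [ J_1(z√(α² + β²))/(z√(α² + β²)) − (β²/(α² + β²)) · J_2(z√(α² + β²)) ]. (This computes the single-step characteristic function of a planar random motion whose direction has the non-uniform density (1/(2π)) sin²θ on [0, 2π], i.e. a persistent planar random flight with drift.) -/

import Mathlib

open MeasureTheory Real

/-- The Bessel function of the first kind of order `ν`, defined by its series. -/
noncomputable def besselJ (ν x : ℝ) : ℝ :=
  ∑' k : ℕ, (-1 : ℝ) ^ k * (x / 2) ^ (2 * (k : ℝ) + ν) /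
    (Real.Gamma ((k : ℝ) + 1) * Real.Gamma ((k : ℝ) + ν + 1))

/-!
Write `(α, β) = r (cos ψ, sin ψ)`, so that the phase is `x cos (θ - ψ)` with `x = z r`;
shifting by `ψ` over a period turns `sin² θ` into
`sin² (θ + ψ) = cos² ψ sin² θ + 2 sin ψ cos ψ sin θ cos θ + sin² ψ cos² θ`.
The middle term integrates to zero by the symmetry `θ ↦ 2π - θ`. For the other two, expand
`exp (i x cos θ)` in its power series and integrate termwise: odd powers of `cos θ` integrate to
zero, the even moments `∫ cos^(2m) = 2π (2m)! / (4^m m!²)` follow from the reduction formula, and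
the resulting series are those of `J₁(x) / x` and of `J₁(x) / x - J₂(x)`.
-/

open Nat

theorem integral_cos_pow_add_two_zero_two_pi (n : ℕ) :
    ∫ θ in (0 : ℝ)..2 * π, cos θ ^ (n + 2) =
      (n + 1) / (n + 2) * ∫ θ in (0 : ℝ)..2 * π, cos θ ^ n := by
  simp [integral_cos_pow]

theorem integral_cos_pow_two_mul_zero_two_pi (m : ℕ) :
    ∫ θ in (0 : ℝ)..2 * π, cos θ ^ (2 * m) = 2 * π * (2 * m)! / (4 ^ m * (m ! : ℝ) ^ 2) := by
  induction m with
  | zero => simp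
  | succ m ih =>
    rw [mul_add_one, integral_cos_pow_add_two_zero_two_pi, ih, Nat.factorial_succ,
      show 2 * m + 2 = 2 * m + 1 + 1 by ring, Nat.factorial_succ, Nat.factorial_succ]
    push_cast
    field_simp
    ring

theorem integral_cos_pow_two_mul_add_one_zero_two_pi (m : ℕ) :
    ∫ θ in (0 : ℝ)..2 * π, cos θ ^ (2 * m + 1) = 0 := by
  induction m with
  | zero => simp
  | succ m ih =>
    rw [show 2 * (m + 1) + 1 = 2 * m + 1 + 2 by ring, integral_cos_pow_add_two_zero_two_pi, ih,
      mul_zero]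

theorem integral_cos_pow_mul_sin_sq_zero_two_pi (n : ℕ) :
    ∫ θ in (0 : ℝ)..2 * π, cos θ ^ n * sin θ ^ 2 =
      (∫ θ in (0 : ℝ)..2 * π, cos θ ^ n) / (n + 2) := by
  have h : ∫ θ in (0 : ℝ)..2 * π, cos θ ^ n * sin θ ^ 2 =
      (∫ θ in (0 : ℝ)..2 * π, cos θ ^ n) - ∫ θ in (0 : ℝ)..2 * π, cos θ ^ (n + 2) := by
    rw [← intervalIntegral.integral_sub (by apply Continuous.intervalIntegrable; fun_prop)
      (by apply Continuous.intervalIntegrable; fun_prop)]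
    congr 1 with θ
    rw [sin_sq]; ring
  rw [h, integral_cos_pow_add_two_zero_two_pi]
  field_simp
  ring

theorem hasSum_integral_cexp_mul_cos {a b : ℝ} (c : ℂ) {f : ℝ → ℂ}
    (hf : IntervalIntegrable f volume a b) :
    HasSum (fun n : ℕ => c ^ n / n ! * ∫ t in a..b, (cos t : ℂ) ^ n * f t)
      (∫ t in a..b, Complex.exp (c * cos t) * f t) := by
  have hterm (n : ℕ) : (fun t : ℝ => (c * cos t) ^ n / n ! * f t) =
      fun t => c ^ n / n ! * ((cos t : ℂ) ^ n * f t) := by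
    ext t; ring
  simp_rw [← intervalIntegral.integral_const_mul, ← hterm]
  refine intervalIntegral.hasSum_integral_of_dominated_convergence
    (fun n t => ‖c‖ ^ n / n ! * ‖f t‖) (fun n => ?_) (fun n => ?_) ?_ ?_ ?_
  · have hcont : Continuous fun t : ℝ => (c * cos t) ^ n / n ! := by fun_prop
    exact hcont.aestronglyMeasurable.mul hf.def'.aestronglyMeasurable
  · refine .of_forall fun t _ => ?_
    rw [norm_mul, norm_div, norm_pow, norm_mul, Complex.norm_natCast]
    gcongr
    rw [Complex.norm_real]
    exact mul_le_of_le_one_right (norm_nonneg c) (abs_cos_le_one t)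
  · exact .of_forall fun t _ => (Real.summable_pow_div_factorial _).mul_right _
  · simp_rw [tsum_mul_right]
    exact hf.norm.const_mul _
  · refine .of_forall fun t _ => ?_
    rw [Complex.exp_eq_exp_ℂ]
    exact (NormedSpace.expSeries_div_hasSum_exp (c * cos t)).mul_right (f t)

theorem HasSum.comp_two_mul_of_odd_eq_zero {M : Type*} [AddCommMonoid M] [TopologicalSpace M]
    {f : ℕ → M} {a : M} (hf : HasSum f a) (hodd : ∀ m, f (2 * m + 1) = 0) :
    HasSum (fun m => f (2 * m)) a := by
  refine ((mul_right_injective₀ two_ne_zero).hasSum_iff fun n hn => ?_).mpr hf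
  obtain ⟨m, rfl | rfl⟩ := n.even_or_odd'
  · exact absurd ⟨m, rfl⟩ hn
  · exact hodd m

theorem hasSum_integral_cexp_I_mul_cos {a b : ℝ} (x : ℝ) {w : ℝ → ℝ}
    (hw : IntervalIntegrable w volume a b)
    (hodd : ∀ m : ℕ, ∫ t in a..b, cos t ^ (2 * m + 1) * w t = 0) :
    HasSum (fun m : ℕ => (((-1) ^ m * x ^ (2 * m) / (2 * m)! *
        ∫ t in a..b, cos t ^ (2 * m) * w t : ℝ) : ℂ))
      (∫ t in a..b, Complex.exp (Complex.I * x * cos t) * w t) := by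
  have hmoment (n : ℕ) :
      ∫ t in a..b, (cos t : ℂ) ^ n * w t = ((∫ t in a..b, cos t ^ n * w t : ℝ) : ℂ) := by
    rw [← intervalIntegral.integral_ofReal]; push_cast; rfl
  have h := (hasSum_integral_cexp_mul_cos (Complex.I * x) (f := fun t => (w t : ℂ))
    ⟨hw.1.ofReal, hw.2.ofReal⟩).comp_two_mul_of_odd_eq_zero
    fun m => by simp only [hmoment, hodd, Complex.ofReal_zero, mul_zero]
  convert h using 2 with m
  rw [hmoment, mul_pow, pow_mul Complex.I, Complex.I_sq]
  push_cast
  ring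

theorem besselJ_natCast_eq_tsum (n : ℕ) (x : ℝ) :
    besselJ n x = ∑' k : ℕ, (-1) ^ k * (x / 2) ^ (2 * k + n) / (k ! * (k + n)! : ℝ) := by
  refine tsum_congr fun k => ?_
  rw [show 2 * (k : ℝ) + n = ((2 * k + n : ℕ) : ℝ) by push_cast; ring, rpow_natCast,
    show (k : ℝ) + n + 1 = ((k + n : ℕ) : ℝ) + 1 by push_cast; ring, Gamma_nat_eq_factorial,
    Gamma_nat_eq_factorial]

theorem hasSum_besselJ_natCast (n : ℕ) (x : ℝ) :
    HasSum (fun k : ℕ => (-1) ^ k * (x / 2) ^ (2 * k + n) / (k ! * (k + n)! : ℝ))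
      (besselJ n x) := by
  rw [besselJ_natCast_eq_tsum]
  refine Summable.hasSum (.of_norm_bounded
    ((Real.summable_pow_div_factorial ((x / 2) ^ 2)).mul_left (|x / 2| ^ n)) fun k => ?_)
  have hfac : (1 : ℝ) ≤ (k + n)! := mod_cast (k + n).factorial_pos
  rw [Real.norm_eq_abs, abs_div, abs_mul, abs_pow, abs_pow, abs_neg, abs_one, one_pow, one_mul,
    pow_add, pow_mul, sq_abs, abs_of_pos (by positivity : (0 : ℝ) < k ! * (k + n)!)]
  calc ((x / 2) ^ 2) ^ k * |x / 2| ^ n / (k ! * (k + n)!)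
      ≤ ((x / 2) ^ 2) ^ k * |x / 2| ^ n / (k ! * 1) := by gcongr
    _ = |x / 2| ^ n * (((x / 2) ^ 2) ^ k / k !) := by ring

/-- The series of `J₂` reindexed by `m = k + 1`, so that it matches that of `J₁(x) / x` termwise;
the added `m = 0` term vanishes. -/
theorem hasSum_besselJ_two_shifted (x : ℝ) :
    HasSum (fun m : ℕ => -((-1) ^ m * (x / 2) ^ (2 * m) * m / (m ! * (m + 1)! : ℝ)))
      (besselJ 2 x) := by
  rw [← hasSum_nat_add_iff' 1]
  simp only [Finset.range_one, Finset.sum_singleton, CharP.cast_eq_zero, mul_zero, zero_div,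
    neg_zero, sub_zero]
  refine (hasSum_besselJ_natCast 2 x).congr_fun fun k => ?_
  rw [Nat.factorial_succ (k + 1), Nat.factorial_succ k]
  push_cast
  field_simp
  ring

theorem integral_cexp_I_mul_cos_mul_sin_sq {x : ℝ} (hx : x ≠ 0) :
    ∫ θ in (0 : ℝ)..2 * π, Complex.exp (Complex.I * x * cos θ) * ((sin θ ^ 2 : ℝ) : ℂ) =
      ((2 * π * (besselJ 1 x / x) : ℝ) : ℂ) := by
  have hseries := hasSum_integral_cexp_I_mul_cos x (w := fun θ => sin θ ^ 2)
    (by apply Continuous.intervalIntegrable; fun_prop) fun m => by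
      rw [integral_cos_pow_mul_sin_sq_zero_two_pi, integral_cos_pow_two_mul_add_one_zero_two_pi,
        zero_div]
  have hbessel := (hasSum_besselJ_natCast 1 x).mul_left (2 * π / x)
  rw [Nat.cast_one, show 2 * π / x * besselJ 1 x = 2 * π * (besselJ 1 x / x) by ring] at hbessel
  refine hseries.unique (Complex.hasSum_ofReal.mpr (hbessel.congr_fun fun m => ?_))
  rw [integral_cos_pow_mul_sin_sq_zero_two_pi, integral_cos_pow_two_mul_zero_two_pi,
    Nat.factorial_succ m]
  simp only [div_pow, pow_add, pow_mul]
  push_cast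
  field_simp
  ring

theorem integral_cexp_I_mul_cos_mul_cos_sq {x : ℝ} (hx : x ≠ 0) :
    ∫ θ in (0 : ℝ)..2 * π, Complex.exp (Complex.I * x * cos θ) * ((cos θ ^ 2 : ℝ) : ℂ) =
      ((2 * π * (besselJ 1 x / x - besselJ 2 x) : ℝ) : ℂ) := by
  have hseries := hasSum_integral_cexp_I_mul_cos x (w := fun θ => cos θ ^ 2)
    (by apply Continuous.intervalIntegrable; fun_prop) fun m => by
      rw [← intervalIntegral.integral_congr fun θ _ => pow_add (cos θ) (2 * m + 1) 2,
        show 2 * m + 1 + 2 = 2 * (m + 1) + 1 by ring,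
        integral_cos_pow_two_mul_add_one_zero_two_pi]
  have hbessel := (((hasSum_besselJ_natCast 1 x).div_const x).sub
    (hasSum_besselJ_two_shifted x)).mul_left (2 * π)
  rw [Nat.cast_one] at hbessel
  refine hseries.unique (Complex.hasSum_ofReal.mpr (hbessel.congr_fun fun m => ?_))
  rw [← intervalIntegral.integral_congr fun θ _ => pow_add (cos θ) (2 * m) 2,
    show 2 * m + 2 = 2 * (m + 1) by ring, integral_cos_pow_two_mul_zero_two_pi,
    show 2 * (m + 1) = 2 * m + 1 + 1 by ring, Nat.factorial_succ (2 * m + 1),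
    Nat.factorial_succ (2 * m), Nat.factorial_succ m]
  simp only [div_pow, pow_add, pow_mul]
  push_cast
  field_simp
  ring

theorem integral_cexp_I_mul_cos_mul_sin_mul_cos (x : ℝ) :
    ∫ θ in (0 : ℝ)..2 * π,
      Complex.exp (Complex.I * x * cos θ) * ((sin θ * cos θ : ℝ) : ℂ) = 0 := by
  set f : ℝ → ℂ := fun θ =>
    Complex.exp (Complex.I * x * cos θ) * ((sin θ * cos θ : ℝ) : ℂ)
  have hodd (θ : ℝ) : f (2 * π - θ) = -f θ := by
    simp only [f, cos_two_pi_sub, sin_two_pi_sub]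
    push_cast
    ring
  have h := intervalIntegral.integral_comp_sub_left f (2 * π) (a := 0) (b := 2 * π)
  simp only [hodd, intervalIntegral.integral_neg, sub_self, sub_zero] at h
  linear_combination (-1 / 2 : ℂ) * h

theorem Function.Periodic.intervalIntegral_comp_add_right {E : Type*} [NormedAddCommGroup E]
    [NormedSpace ℝ E] {f : ℝ → E} {T : ℝ} (hf : Function.Periodic f T) (t s : ℝ) :
    ∫ x in t..t + T, f (x + s) = ∫ x in t..t + T, f x := by
  rw [intervalIntegral.integral_comp_add_right, add_right_comm,
    hf.intervalIntegral_add_eq (t + s) t]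

theorem integral_cexp_I_mul_cos_sub_mul_sin_sq {x : ℝ} (hx : x ≠ 0) (ψ : ℝ) :
    ∫ θ in (0 : ℝ)..2 * π,
        Complex.exp (Complex.I * x * cos (θ - ψ)) * ((sin θ ^ 2 : ℝ) : ℂ) =
      ((2 * π * (besselJ 1 x / x - sin ψ ^ 2 * besselJ 2 x) : ℝ) : ℂ) := by
  set g : ℝ → ℂ := fun θ =>
    Complex.exp (Complex.I * x * cos (θ - ψ)) * ((sin θ ^ 2 : ℝ) : ℂ)
  have hg : Function.Periodic g (2 * π) := fun θ => by
    simp only [g, show θ + 2 * π - ψ = θ - ψ + 2 * π by ring, cos_add_two_pi, sin_add_two_pi]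
  have hshift : ∫ θ in (0 : ℝ)..2 * π, g θ = ∫ θ in (0 : ℝ)..2 * π, g (θ + ψ) := by
    simpa using (hg.intervalIntegral_comp_add_right 0 ψ).symm
  have hexpand (θ : ℝ) : g (θ + ψ) =
      ((cos ψ ^ 2 : ℝ) : ℂ) *
        (Complex.exp (Complex.I * x * cos θ) * ((sin θ ^ 2 : ℝ) : ℂ)) +
      ((2 * sin ψ * cos ψ : ℝ) : ℂ) *
        (Complex.exp (Complex.I * x * cos θ) * ((sin θ * cos θ : ℝ) : ℂ)) +
      ((sin ψ ^ 2 : ℝ) : ℂ) *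
        (Complex.exp (Complex.I * x * cos θ) * ((cos θ ^ 2 : ℝ) : ℂ)) := by
    simp only [g, add_sub_cancel_right, sin_add]
    push_cast
    ring
  have hint (w : ℝ → ℝ) (hw : Continuous w) : IntervalIntegrable
      (fun θ : ℝ => Complex.exp (Complex.I * x * cos θ) * (w θ : ℂ)) volume 0 (2 * π) := by
    apply Continuous.intervalIntegrable; fun_prop
  rw [hshift, intervalIntegral.integral_congr fun θ _ => hexpand θ,
    intervalIntegral.integral_add ((hint _ (by fun_prop)).const_mul _ |>.add
      ((hint _ (by fun_prop)).const_mul _)) ((hint _ (by fun_prop)).const_mul _),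
    intervalIntegral.integral_add ((hint _ (by fun_prop)).const_mul _)
      ((hint _ (by fun_prop)).const_mul _),
    intervalIntegral.integral_const_mul, intervalIntegral.integral_const_mul,
    intervalIntegral.integral_const_mul, integral_cexp_I_mul_cos_mul_sin_sq hx,
    integral_cexp_I_mul_cos_mul_sin_mul_cos, integral_cexp_I_mul_cos_mul_cos_sq hx, mul_zero,
    add_zero]
  norm_cast
  rw [cos_sq']
  ring

theorem exists_eq_sqrt_mul_cos_and_eq_sqrt_mul_sin (α β : ℝ) :
    ∃ ψ, α = √(α ^ 2 + β ^ 2) * cos ψ ∧ β = √(α ^ 2 + β ^ 2) * sin ψ := by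
  refine ⟨Complex.arg (α + β * Complex.I), ?_, ?_⟩
  · rw [← Complex.norm_add_mul_I, Complex.norm_mul_cos_arg]; simp
  · rw [← Complex.norm_add_mul_I, Complex.norm_mul_sin_arg]; simp

/-- Single-step characteristic function of the persistent planar random flight with drift:
`∫_0^{2π} e^{iz(α cos θ + β sin θ)} sin²θ dθ
 = 2π [ J_1(z√(α²+β²))/(z√(α²+β²)) − (β²/(α²+β²)) J_2(z√(α²+β²)) ]`. -/
theorem stmt19 (z α β : ℝ) (hz : 0 < z) (hαβ : (α, β) ≠ (0, 0)) :
    ∫ θ in (0 : ℝ)..(2 * π),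
      Complex.exp (Complex.I * z * (α * Real.cos θ + β * Real.sin θ)) *
        ((Real.sin θ ^ 2 : ℝ) : ℂ) =
    ((2 * π *
        (besselJ 1 (z * Real.sqrt (α ^ 2 + β ^ 2)) / (z * Real.sqrt (α ^ 2 + β ^ 2)) -
          β ^ 2 / (α ^ 2 + β ^ 2) * besselJ 2 (z * Real.sqrt (α ^ 2 + β ^ 2))) : ℝ) : ℂ) := by
  have hnorm : 0 < α ^ 2 + β ^ 2 := by
    obtain h | h : α ≠ 0 ∨ β ≠ 0 := by
      contrapose! hαβ
      rw [hαβ.1, hαβ.2]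
    all_goals positivity
  obtain ⟨ψ, hα, hβ⟩ := exists_eq_sqrt_mul_cos_and_eq_sqrt_mul_sin α β
  set r := √(α ^ 2 + β ^ 2)
  have hr0 : 0 < r := sqrt_pos.mpr hnorm
  have hr2 : r ^ 2 = α ^ 2 + β ^ 2 := sq_sqrt hnorm.le
  have hexponent (θ : ℝ) : Complex.I * z * (α * cos θ + β * sin θ) =
      Complex.I * (z * r : ℝ) * cos (θ - ψ) := by
    rw [hα, hβ, cos_sub]
    push_cast
    ring
  have hsin : sin ψ ^ 2 = β ^ 2 / (α ^ 2 + β ^ 2) := by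
    rw [← hr2, hβ]
    field_simp
  simp_rw [hexponent]
  rw [integral_cexp_I_mul_cos_sub_mul_sin_sq (by positivity), hsin]
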